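/- For any pair of mergeable simple games (N,v) and (N,v'), the Public Good power index satisfies: PG_i(N, v ∨ v') = (Σ_{j∈N}|M_j(v)|·PG_i(N,v) + Σ_{j∈N}|M_j(v')|·PG_i(N,v')) / Σ_{j∈N}|M_j(v ∨ v')| for every player i. -/
import Mathlib


open scoped Classical

variable {α : Type*} [Fintype α] [DecidableEq α]

/-- A simple game in characteristic function form: `{0,1}`-valued, `v ∅ = 0`,
the grand coalition wins, and monotone. -/
def IsSimpleGame (v : Finset α → ℝ) : Prop :=
  (∀ S, v S = 0 ∨ v S = 1) ∧ v ∅ = 0 ∧ v Finset.univ = 1 ∧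
    ∀ S T : Finset α, S ⊆ T → v S ≤ v T

/-- The set of minimal winning coalitions. -/
noncomputable def MW (v : Finset α → ℝ) : Finset (Finset α) :=
  Finset.univ.filter (fun S => v S = 1 ∧ ∀ T : Finset α, T ⊂ S → v T = 0)

/-- The minimal winning coalitions containing player `i`. -/
noncomputable def MWi (v : Finset α → ℝ) (i : α) : Finset (Finset α) :=
  (MW v).filter (fun S => i ∈ S)

/-- The Deegan–Packel power index. -/
noncomputable def DP (v : Finset α → ℝ) (i : α) : ℝ :=
  (1 / ((MW v).card : ℝ)) * ∑ S ∈ MWi v i, (1 / (S.card : ℝ))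

/-- The Public Good power index. -/
noncomputable def PG (v : Finset α → ℝ) (i : α) : ℝ :=
  ((MWi v i).card : ℝ) / ∑ j : α, ((MWi v j).card : ℝ)

/-- Mergeability of two simple games. -/
def Mergeable (v v' : Finset α → ℝ) : Prop :=
  ∀ S ∈ MW v, ∀ T ∈ MW v', ¬ S ⊆ T ∧ ¬ T ⊆ S

/-- The weighted majority game with quota `q` and weights `w`. -/
noncomputable def wmg (q : ℝ) (w : α → ℝ) : Finset α → ℝ :=
  fun S => if q ≤ ∑ i ∈ S, w i then 1 else 0

/-- The Colomer-Martínez power index. -/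
noncomputable def CM (q : ℝ) (w : α → ℝ) (i : α) : ℝ :=
  (1 / ((MW (wmg q w)).card : ℝ)) * ∑ S ∈ MWi (wmg q w) i, (w i / ∑ j ∈ S, w j)

/-- The Holler-Colomer-Martínez power index. -/
noncomputable def HCM (q : ℝ) (w : α → ℝ) (i : α) : ℝ :=
  (((MWi (wmg q w) i).card : ℝ) * w i) / ∑ j : α, ((MWi (wmg q w) j).card : ℝ) * w j

lemma mem_MW_iff (v : Finset α → ℝ) (S : Finset α) :
    S ∈ MW v ↔ v S = 1 ∧ ∀ T : Finset α, T ⊂ S → v T = 0 := by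
  simp [MW]

lemma exists_mw (v : Finset α → ℝ) (hv : IsSimpleGame v) :
    ∀ T : Finset α, v T = 1 → ∃ S, S ⊆ T ∧ S ∈ MW v := by
  intro T
  induction T using Finset.strongInductionOn with
  | _ T ih =>
    intro hT
    by_cases h : ∀ U ⊂ T, v U = 0
    · exact ⟨T, subset_rfl, (mem_MW_iff v T).2 ⟨hT, h⟩⟩
    · push_neg at h
      obtain ⟨U, hU, hU0⟩ := h
      obtain ⟨S, hS, hSm⟩ := ih U hU ((hv.1 U).resolve_left hU0)
      exact ⟨S, hS.trans hU.subset, hSm⟩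

lemma mw_union (v v' : Finset α → ℝ) (hv : IsSimpleGame v) (hv' : IsSimpleGame v')
    (hm : Mergeable v v') :
    MW (fun S => max (v S) (v' S)) = MW v ∪ MW v' := by
  ext S
  simp only [mem_MW_iff, Finset.mem_union]
  constructor
  · rintro ⟨h1, h2⟩
    have hcase : v S = 1 ∨ v' S = 1 := by
      rcases hv.1 S with h | h <;> rcases hv'.1 S with h' | h' <;>
        simp [h, h'] at h1 ⊢
    rcases hcase with h | h
    · left
      refine ⟨h, fun T hT => ?_⟩
      have := h2 T hT
      have h0 : v T ≤ max (v T) (v' T) := le_max_left _ _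
      rcases hv.1 T with hT0 | hT1
      · exact hT0
      · exfalso; rw [hT1] at this
        have h3 := le_max_left (1:ℝ) (v' T); rw [this] at h3; linarith
    · right
      refine ⟨h, fun T hT => ?_⟩
      have := h2 T hT
      have h0 : v' T ≤ max (v T) (v' T) := le_max_right _ _
      rcases hv'.1 T with hT0 | hT1
      · exact hT0
      · exfalso; rw [hT1] at this
        have h3 := le_max_right (v T) (1:ℝ); rw [this] at h3; linarith
  · rintro (⟨h1, h2⟩ | ⟨h1, h2⟩)
    · refine ⟨?_, fun T hT => ?_⟩
      · rcases hv'.1 S with h | h <;> simp [h1, h]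
      · have hvT := h2 T hT
        have hv'T : v' T = 0 := by
          by_contra h0
          obtain ⟨T', hT'sub, hT'⟩ := exists_mw v' hv' T ((hv'.1 T).resolve_left h0)
          exact (hm S ((mem_MW_iff v S).2 ⟨h1, h2⟩) T' hT').2
            (hT'sub.trans hT.subset)
        simp [hvT, hv'T]
    · refine ⟨?_, fun T hT => ?_⟩
      · rcases hv.1 S with h | h <;> simp [h1, h]
      · have hv'T := h2 T hT
        have hvT : v T = 0 := by
          by_contra h0
          obtain ⟨T', hT'sub, hT'⟩ := exists_mw v hv T ((hv.1 T).resolve_left h0)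
          exact (hm T' hT' S ((mem_MW_iff v' S).2 ⟨h1, h2⟩)).1
            (hT'sub.trans hT.subset)
        simp [hvT, hv'T]

lemma mw_disjoint (v v' : Finset α → ℝ) (hm : Mergeable v v') :
    Disjoint (MW v) (MW v') := by
  rw [Finset.disjoint_left]
  intro S hS hS'
  exact (hm S hS S hS').1 subset_rfl

lemma sum_mwi_pos (v : Finset α → ℝ) (hv : IsSimpleGame v) :
    0 < ∑ j : α, ((MWi v j).card : ℝ) := by
  obtain ⟨S, -, hS⟩ := exists_mw v hv Finset.univ hv.2.2.1
  have hSne : S.Nonempty := by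
    rcases S.eq_empty_or_nonempty with rfl | h
    · exfalso
      have := ((mem_MW_iff v ∅).1 hS).1
      rw [hv.2.1] at this; linarith
    · exact h
  obtain ⟨j, hj⟩ := hSne
  apply Finset.sum_pos'
  · intro k _; positivity
  · refine ⟨j, Finset.mem_univ j, ?_⟩
    have : S ∈ MWi v j := Finset.mem_filter.2 ⟨hS, hj⟩
    have : 0 < (MWi v j).card := Finset.card_pos.2 ⟨S, this⟩
    exact_mod_cast this

lemma mwi_card_add (v v' : Finset α → ℝ) (hv : IsSimpleGame v) (hv' : IsSimpleGame v')
    (hm : Mergeable v v') (j : α) :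
    ((MWi (fun S => max (v S) (v' S)) j).card : ℝ)
      = ((MWi v j).card : ℝ) + ((MWi v' j).card : ℝ) := by
  have h1 : MWi (fun S => max (v S) (v' S)) j = MWi v j ∪ MWi v' j := by
    rw [MWi, mw_union v v' hv hv' hm, Finset.filter_union]; rfl
  have h2 : Disjoint (MWi v j) (MWi v' j) :=
    (mw_disjoint v v' hm).mono (Finset.filter_subset _ _) (Finset.filter_subset _ _)
  rw [h1, Finset.card_union_of_disjoint h2]
  push_cast; ring

/-- The Public Good merging formula for mergeable simple games. -/
theorem PG_mergeable (v v' : Finset α → ℝ)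
    (hv : IsSimpleGame v) (hv' : IsSimpleGame v') (hm : Mergeable v v') (i : α) :
    PG (fun S => max (v S) (v' S)) i =
      ((∑ j : α, ((MWi v j).card : ℝ)) * PG v i +
        (∑ j : α, ((MWi v' j).card : ℝ)) * PG v' i) /
        (∑ j : α, ((MWi (fun S => max (v S) (v' S)) j).card : ℝ)) := by
  have hA : 0 < ∑ j : α, ((MWi v j).card : ℝ) := sum_mwi_pos v hv
  have hB : 0 < ∑ j : α, ((MWi v' j).card : ℝ) := sum_mwi_pos v' hv'
  have hsum : ∀ j, ((MWi (fun S => max (v S) (v' S)) j).card : ℝ)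
      = ((MWi v j).card : ℝ) + ((MWi v' j).card : ℝ) :=
    mwi_card_add v v' hv hv' hm
  have hC : (∑ j : α, ((MWi (fun S => max (v S) (v' S)) j).card : ℝ))
      = (∑ j : α, ((MWi v j).card : ℝ)) + (∑ j : α, ((MWi v' j).card : ℝ)) := by
    rw [← Finset.sum_add_distrib]
    exact Finset.sum_congr rfl fun j _ => hsum j
  rw [PG, PG, PG, hC, hsum i]
  have hA' : (∑ j : α, ((MWi v j).card : ℝ)) ≠ 0 := ne_of_gt hA
  have hB' : (∑ j : α, ((MWi v' j).card : ℝ)) ≠ 0 := ne_of_gt hB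
  congr 1
  field_simp
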